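/- arXiv:2003.13651 — 2 statements merged into one kernel-verified Lean document; each statement's English description precedes it below -/
import Mathlib

section
/- In the logic QRC₁, if φ ⊢ ψ is derivable, x is not free in φ, and the term t is free for x in ψ, then φ ⊢ ψ[x/t] is derivable. -/
/-- A signature: constants and relation symbols with arities (no function symbols). -/
structure Signature where
  Const : Type
  Rel : Type
  arity : Rel → ℕ

/-- Terms: variables (numbered) or constants. -/
inductive Term (Sig : Signature) : Type where
  | var : ℕ → Term Sig
  | const : Sig.Const → Term Sig

/-- Strictly positive formulas of QRC₁. -/
inductive Formula (Sig : Signature) : Type where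
  | top : Formula Sig
  | rel : (S : Sig.Rel) → (Fin (Sig.arity S) → Term Sig) → Formula Sig
  | and : Formula Sig → Formula Sig → Formula Sig
  | dia : Formula Sig → Formula Sig
  | all : ℕ → Formula Sig → Formula Sig

namespace Term

variable {Sig : Signature}

def fv : Term Sig → Set ℕ
  | var x => {x}
  | const _ => ∅

def consts : Term Sig → Set Sig.Const
  | var _ => ∅
  | const c => {c}

def subst (t : Term Sig) (x : ℕ) (u : Term Sig) : Term Sig :=
  match t with
  | var y => if y = x then u else var y
  | const c => const c

end Term

namespace Formula

variable {Sig : Signature}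

/-- Free variables of a formula. -/
def fv : Formula Sig → Set ℕ
  | top => ∅
  | rel _ ts => ⋃ i, (ts i).fv
  | and φ ψ => φ.fv ∪ ψ.fv
  | dia φ => φ.fv
  | all x φ => φ.fv \ {x}

/-- Constants occurring in a formula. -/
def consts : Formula Sig → Set Sig.Const
  | top => ∅
  | rel _ ts => ⋃ i, (ts i).consts
  | and φ ψ => φ.consts ∪ ψ.consts
  | dia φ => φ.consts
  | all _ φ => φ.consts

/-- Simultaneous substitution of the term `u` for the free occurrences of `x`. -/
def subst : Formula Sig → ℕ → Term Sig → Formula Sig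
  | top, _, _ => top
  | rel S ts, x, u => rel S (fun i => (ts i).subst x u)
  | and φ ψ, x, u => and (φ.subst x u) (ψ.subst x u)
  | dia φ, x, u => dia (φ.subst x u)
  | all y φ, x, u => if y = x then all y φ else all y (φ.subst x u)

/-- `t` is free for `x` in `φ`: no free variable of `t` becomes bound in `φ[x/t]`. -/
def freeFor : Formula Sig → ℕ → Term Sig → Prop
  | top, _, _ => True
  | rel _ _, _, _ => True
  | and φ ψ, x, t => φ.freeFor x t ∧ ψ.freeFor x t
  | dia φ, x, t => φ.freeFor x t
  | all y φ, x, t => x ∉ (Formula.all y φ).fv ∨ (y ∉ t.fv ∧ φ.freeFor x t)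

/-- Modal depth. -/
def mdepth : Formula Sig → ℕ
  | top => 0
  | rel _ _ => 0
  | and φ ψ => max φ.mdepth ψ.mdepth
  | dia φ => φ.mdepth + 1
  | all _ φ => φ.mdepth

def size : Formula Sig → ℕ
  | top => 1
  | rel _ _ => 1
  | and φ ψ => φ.size + ψ.size + 1
  | dia φ => φ.size + 1
  | all _ φ => φ.size + 1

theorem size_subst (φ : Formula Sig) (x : ℕ) (t : Term Sig) :
    (φ.subst x t).size = φ.size := by
  induction φ with
  | top => rfl
  | rel S ts => rfl
  | and φ ψ ihφ ihψ => simp [Formula.subst, Formula.size, ihφ, ihψ]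
  | dia φ ih => simp [Formula.subst, Formula.size, ih]
  | all y φ ih =>
      by_cases h : y = x <;> simp [Formula.subst, Formula.size, h, ih]

end Formula

/-- Derivability of sequents `φ ⊢ ψ` in QRC₁. -/
inductive Derives {Sig : Signature} : Formula Sig → Formula Sig → Prop where
  | topIntro (φ : Formula Sig) : Derives φ .top
  | refl (φ : Formula Sig) : Derives φ φ
  | andE₁ (φ ψ : Formula Sig) : Derives (.and φ ψ) φ
  | andE₂ (φ ψ : Formula Sig) : Derives (.and φ ψ) ψ
  | andI {φ ψ χ : Formula Sig} : Derives φ ψ → Derives φ χ → Derives φ (.and ψ χ)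
  | cut {φ ψ χ : Formula Sig} : Derives φ ψ → Derives ψ χ → Derives φ χ
  | nec {φ ψ : Formula Sig} : Derives φ ψ → Derives (.dia φ) (.dia ψ)
  | diaTrans (φ : Formula Sig) : Derives (.dia (.dia φ)) (.dia φ)
  | diaAll (x : ℕ) (φ : Formula Sig) : Derives (.dia (.all x φ)) (.all x (.dia φ))
  | allR {φ ψ : Formula Sig} {x : ℕ} : Derives φ ψ → x ∉ φ.fv → Derives φ (.all x ψ)
  | allL {φ ψ : Formula Sig} {x : ℕ} {t : Term Sig} :
      Derives (φ.subst x t) ψ → φ.freeFor x t → Derives (.all x φ) ψ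
  | termInst {φ ψ : Formula Sig} {x : ℕ} {t : Term Sig} :
      Derives φ ψ → φ.freeFor x t → ψ.freeFor x t →
      Derives (φ.subst x t) (ψ.subst x t)
  | constGen {φ ψ : Formula Sig} {x : ℕ} {c : Sig.Const} :
      Derives (φ.subst x (.const c)) (ψ.subst x (.const c)) →
      c ∉ φ.consts → c ∉ ψ.consts → Derives φ ψ

/-- Extension of a signature by a collection `C` of new constants. -/
def Signature.extend (Sig : Signature) (C : Type) : Signature :=
  ⟨Sig.Const ⊕ C, Sig.Rel, Sig.arity⟩

/-- A term of `Sig` seen as a term of the extended signature. -/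
def Term.lift {Sig : Signature} {C : Type} : Term Sig → Term (Sig.extend C)
  | .var x => .var x
  | .const c => .const (Sum.inl c)

/-- A formula of `Sig` seen as a formula of the extended signature. -/
def Formula.lift {Sig : Signature} {C : Type} : Formula Sig → Formula (Sig.extend C)
  | .top => .top
  | .rel S ts => .rel S (fun i => (ts i).lift)
  | .and φ ψ => .and φ.lift ψ.lift
  | .dia φ => .dia φ.lift
  | .all x φ => .all x φ.lift

/-! ### Relational semantics -/

/-- A relational model (on an underlying frame `⟨W, R, D⟩`):
worlds, accessibility, finite domains, constant and relation interpretations. -/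
structure Model (Sig : Signature) where
  W : Type
  U : Type
  nonempty : Nonempty W
  R : W → W → Prop
  D : W → Set U
  Dfin : ∀ w, (D w).Finite
  I : W → Sig.Const → U
  Imem : ∀ w c, I w c ∈ D w
  J : (w : W) → (S : Sig.Rel) → Set (Fin (Sig.arity S) → U)
  Jmem : ∀ w S f, f ∈ J w S → ∀ i, f i ∈ D w

namespace Model

variable {Sig : Signature}

/-- A `w`-assignment: a map from variables into the domain of `w`. -/
def IsAssignment (M : Model Sig) (w : M.W) (g : ℕ → M.U) : Prop :=
  ∀ n, g n ∈ M.D w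

/-- Value of a term at a world under an assignment. -/
def tval (M : Model Sig) (w : M.W) (g : ℕ → M.U) : Term Sig → M.U
  | .var x => g x
  | .const c => M.I w c

end Model

/-- `Γ`-alternative assignments: they agree on all variables outside `Γ`. -/
def AltOn {U : Type} (Γ : Set ℕ) (g h : ℕ → U) : Prop :=
  ∀ y, y ∉ Γ → g y = h y

/-- Truth at a world under an assignment. -/
def Model.Forces {Sig : Signature} (M : Model Sig) :
    M.W → (ℕ → M.U) → Formula Sig → Prop
  | _, _, .top => True
  | w, g, .rel S ts => (fun i => M.tval w g (ts i)) ∈ M.J w S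
  | w, g, .and φ ψ => M.Forces w g φ ∧ M.Forces w g ψ
  | w, g, .dia φ => ∃ v, M.R w v ∧ M.Forces v g φ
  | w, g, .all x φ =>
      ∀ h : ℕ → M.U, M.IsAssignment w h → AltOn {x} g h → M.Forces w h φ

/-- Adequate models: inclusive, transitive, and concordant. -/
def Model.Adequate {Sig : Signature} (M : Model Sig) : Prop :=
  (∀ w u, M.R w u → M.D w ⊆ M.D u) ∧
  (∀ w u v, M.R w u → M.R u v → M.R w v) ∧
  (∀ w u, M.R w u → ∀ c, M.I w c = M.I u c)

/-- The model `M` restricted at the world `r`. -/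
def Model.restrict {Sig : Signature} (M : Model Sig) (r : M.W) : Model Sig where
  W := {w : M.W // w = r ∨ M.R r w}
  U := M.U
  nonempty := ⟨⟨r, Or.inl rfl⟩⟩
  R w v := M.R w.1 v.1
  D w := M.D w.1
  Dfin w := M.Dfin w.1
  I w c := M.I w.1 c
  Imem w c := M.Imem w.1 c
  J w S := M.J w.1 S
  Jmem w S f h i := M.Jmem w.1 S f h i

/-- The model `M` restricted at `r`, with the interpretation of the constant `c`
set to `d ∈ M_r` at every world. -/
noncomputable def Model.restrictSubst {Sig : Signature} (M : Model Sig) (r : M.W) (c : Sig.Const)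
    (d : M.U) (hd : d ∈ M.D r) (hinc : ∀ w u, M.R w u → M.D w ⊆ M.D u) : Model Sig :=
  { M.restrict r with
    I := fun w c' => @ite _ (c' = c) (Classical.propDecidable _) d (M.I w.1 c')
    Imem := by
      intro w c'
      by_cases h : c' = c
      · simp only [h, if_pos rfl]
        rcases w.2 with h' | h'
        · show d ∈ M.D w.1; rw [h']; exact hd
        · exact hinc r w.1 h' hd
      · show @ite _ (c' = c) (Classical.propDecidable _) d (M.I w.1 c') ∈ M.D w.1
        simp only [if_neg h]
        exact M.Imem w.1 c' }

/-! ### Pairs, closure, maximal consistency -/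

/-- A pair of sets of formulas (positive and negative part). -/
structure Pair (Sig : Signature) where
  pos : Set (Formula Sig)
  neg : Set (Formula Sig)

/-- `Γ ⊢ φ`: some finite conjunction of members of `Γ` derives `φ`. -/
def SetDerives {Sig : Signature} (Γ : Set (Formula Sig)) (φ : Formula Sig) : Prop :=
  ∃ (γ : Formula Sig) (l : List (Formula Sig)),
    γ ∈ Γ ∧ (∀ δ ∈ l, δ ∈ Γ) ∧ Derives (l.foldl Formula.and γ) φ

namespace Pair

variable {Sig : Signature}

/-- A pair is consistent if no member of the negative part follows from the positive part. -/
def Consistent (p : Pair Sig) : Prop :=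
  ∀ δ ∈ p.neg, ¬ SetDerives p.pos δ

/-- `q` is a `Φ`-extension of `p`. -/
def Ext (p q : Pair Sig) (Φ : Set (Formula Sig)) : Prop :=
  p.pos ⊆ q.pos ∧ q.pos ⊆ Φ ∧ p.neg ⊆ q.neg ∧ q.neg ⊆ Φ

/-- `Φ`-maximal consistency. -/
def MaxCons (p : Pair Sig) (Φ : Set (Formula Sig)) : Prop :=
  p.Consistent ∧ p.pos ⊆ Φ ∧ p.neg ⊆ Φ ∧
    ∀ q : Pair Sig, p.Ext q Φ → q.Consistent → q = p

/-- A pair is fully witnessed if every negative universal has a constant witness. -/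
def FullyWitnessed (p : Pair Sig) : Prop :=
  ∀ (x : ℕ) (φ : Formula Sig), Formula.all x φ ∈ p.neg →
    ∃ c : Sig.Const, φ.subst x (.const c) ∈ p.neg

end Pair

/-- Closure of a formula under a set of constants. -/
def Cl {Sig : Signature} (C : Set Sig.Const) : Formula Sig → Set (Formula Sig)
  | .top => {.top}
  | .rel S ts => {.rel S ts, .top}
  | .and φ ψ => {.and φ ψ} ∪ Cl C φ ∪ Cl C ψ
  | .dia φ => {.dia φ} ∪ Cl C φ
  | .all x φ => {.all x φ} ∪ ⋃ c ∈ C, Cl C (φ.subst x (.const c))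
termination_by φ => φ.size
decreasing_by
  all_goals simp [Formula.size, Formula.size_subst]
  all_goals omega

/-- Closure of a set of formulas under a set of constants. -/
def ClSet {Sig : Signature} (C : Set Sig.Const) (Γ : Set (Formula Sig)) :
    Set (Formula Sig) :=
  ⋃ φ ∈ Γ, Cl C φ

/-- Modal depth of a set of formulas (as a supremum in ℕ). -/
noncomputable def mdepthSet {Sig : Signature} (Γ : Set (Formula Sig)) : ℕ :=
  sSup (Formula.mdepth '' Γ)

/-- The relation `R̂` between pairs. -/
def hatR {Sig : Signature} (p q : Pair Sig) : Prop :=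
  (∀ φ : Formula Sig, Formula.dia φ ∈ p.neg → φ ∈ q.neg ∧ Formula.dia φ ∈ q.neg) ∧
  (∃ ψ : Formula Sig, Formula.dia ψ ∈ p.pos ∧ Formula.dia ψ ∈ q.neg)

theorem Derives.all_subst {Sig : Signature} {ψ : Formula Sig} {x : ℕ} {t : Term Sig}
    (ht : ψ.freeFor x t) : Derives (.all x ψ) (ψ.subst x t) :=
  .allL (.refl _) ht

/-- In QRC₁, if φ ⊢ ψ, x is not free in φ, and t is free for x in ψ,
then φ ⊢ ψ[x/t]. -/
theorem qrc1_subst_right (Sig : Signature) (φ ψ : Formula Sig) (x : ℕ) (t : Term Sig)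
    (hd : Derives φ ψ) (hx : x ∉ φ.fv) (ht : ψ.freeFor x t) :
    Derives φ (ψ.subst x t) :=
  (hd.allR hx).cut (Derives.all_subst ht)
end

section
/- Let c be a constant, φ a formula in which c does not appear, M an adequate relational model, w a world, x a variable, and g a w-assignment. Then M,w ⊩^g φ if and only if M↾w[c/g(x)], w ⊩^g φ[x/c]. -/
/-! The restricted model `M↾w[c/d]` agrees with `M` on every formula not mentioning `c`, because
restricting a transitive frame to the cone of `w` keeps all successors of its worlds.
Inside `M↾w[c/d]` the constant `c` denotes `d` rigidly, so substituting `c` for a variable whose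
value is `d` changes nothing. -/

namespace Model

variable {Sig : Signature}

theorem tval_subst_const (N : Model Sig) (v : N.W) (h : ℕ → N.U) {x : ℕ} {c : Sig.Const}
    (hx : N.I v c = h x) (t : Term Sig) :
    N.tval v h (t.subst x (.const c)) = N.tval v h t := by
  cases t with
  | var y =>
    by_cases hy : y = x
    · subst hy
      simpa [Term.subst, tval] using hx
    · simp [Term.subst, hy]
  | const c' => rfl

theorem forces_subst_const_iff (N : Model Sig) {c : Sig.Const} {d : N.U}
    (hc : ∀ u, N.I u c = d) (φ : Formula Sig) {x : ℕ} :
    ∀ (v : N.W) (h : ℕ → N.U), h x = d →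
      (N.Forces v h (φ.subst x (.const c)) ↔ N.Forces v h φ) := by
  induction φ with
  | top => exact fun _ _ _ => Iff.rfl
  | rel S ts =>
    intro v h hx
    simp only [Formula.subst, Forces, tval_subst_const N v h ((hc v).trans hx.symm)]
  | and φ ψ ihφ ihψ => exact fun v h hx => and_congr (ihφ v h hx) (ihψ v h hx)
  | dia φ ih => exact fun v h hx => exists_congr fun u => and_congr_right' (ih u h hx)
  | all y φ ih =>
    intro v h hx
    by_cases hyx : y = x
    · simp only [Formula.subst, if_pos hyx]
    · simp only [Formula.subst, if_neg hyx, Forces]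
      refine forall_congr' fun h' => imp_congr_right fun _ => imp_congr_right fun halt => ?_
      exact ih v h' ((halt x (Ne.symm hyx)).symm.trans hx)

variable {M : Model Sig} {r : M.W}

theorem restrict_mem_of_R (htrans : ∀ w u v, M.R w u → M.R u v → M.R w v)
    {v : M.W} (hv : v = r ∨ M.R r v) {u : M.W} (hvu : M.R v u) : u = r ∨ M.R r u := by
  rcases hv with rfl | hrv
  · exact Or.inr hvu
  · exact Or.inr (htrans r v u hrv hvu)

variable {c : Sig.Const} {d : M.U} {hd : d ∈ M.D r} {hinc : ∀ w u, M.R w u → M.D w ⊆ M.D u}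

theorem restrictSubst_I_self (u : (M.restrictSubst r c d hd hinc).W) :
    (M.restrictSubst r c d hd hinc).I u c = d :=
  if_pos rfl

theorem tval_restrictSubst (u : (M.restrictSubst r c d hd hinc).W) (h : ℕ → M.U)
    {t : Term Sig} (hct : c ∉ t.consts) :
    (M.restrictSubst r c d hd hinc).tval u h t = M.tval u.1 h t := by
  cases t with
  | var y => rfl
  | const c' =>
    have hc' : c' ≠ c := by rintro rfl; exact hct rfl
    exact if_neg hc'

theorem forces_restrictSubst_iff (htrans : ∀ w u v, M.R w u → M.R u v → M.R w v)
    {φ : Formula Sig} (hc : c ∉ φ.consts) :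
    ∀ (u : (M.restrictSubst r c d hd hinc).W) (h : ℕ → M.U),
      ((M.restrictSubst r c d hd hinc).Forces u h φ ↔ M.Forces u.1 h φ) := by
  induction φ with
  | top => exact fun _ _ => Iff.rfl
  | rel S ts =>
    intro u h
    have hts : ∀ i, c ∉ (ts i).consts := fun i hi => hc (Set.mem_iUnion.mpr ⟨i, hi⟩)
    simp only [Forces, tval_restrictSubst u h (hts _)]
    rfl
  | and φ ψ ihφ ihψ =>
    exact fun u h => and_congr (ihφ (fun hφ => hc (Or.inl hφ)) u h)
      (ihψ (fun hψ => hc (Or.inr hψ)) u h)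
  | dia φ ih =>
    intro u h
    constructor
    · rintro ⟨v, huv, hv⟩
      exact ⟨v.1, huv, (ih hc v h).mp hv⟩
    · rintro ⟨v, huv, hv⟩
      exact ⟨⟨v, restrict_mem_of_R htrans u.2 huv⟩, huv, (ih hc _ h).mpr hv⟩
  | all y φ ih =>
    exact fun u h => forall_congr' fun h' => imp_congr_right fun _ =>
      imp_congr_right fun _ => ih hc u h'

end Model

/-- For a constant c not appearing in φ, an adequate model M, a world w,
a variable x, and a w-assignment g: M,w ⊩^g φ iff M↾w[c/g(x)],w ⊩^g φ[x/c]. -/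
theorem forces_model_subst (Sig : Signature) (c : Sig.Const) (φ : Formula Sig)
    (hc : c ∉ φ.consts) (M : Model Sig) (hM : M.Adequate) (w : M.W) (x : ℕ)
    (g : ℕ → M.U) (hg : M.IsAssignment w g) :
    M.Forces w g φ ↔
      (M.restrictSubst w c (g x) (hg x) hM.1).Forces ⟨w, Or.inl rfl⟩ g
        (φ.subst x (Term.const c)) := by
  let N := M.restrictSubst w c (g x) (hg x) hM.1
  let w' : N.W := ⟨w, Or.inl rfl⟩
  calc M.Forces w g φ ↔ N.Forces w' g φ := (Model.forces_restrictSubst_iff hM.2.1 hc w' g).symm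
    _ ↔ N.Forces w' g (φ.subst x (Term.const c)) :=
        (N.forces_subst_const_iff Model.restrictSubst_I_self φ w' g rfl).symm
end
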